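/- For every even m ≥ 0, ⟨x_m λ, α_2^∨⟩ = −p_m < 0 and r_2 · (x_m λ) = x_{m−1} λ (for m ≥ 2, with x_0 λ = λ); for every odd m ≥ 1, ⟨x_m λ, α_1^∨⟩ = −p_m < 0 and r_1 · (x_m λ) = x_{m−1} λ. -/
import Mathlib


def pseq (a b : ℤ) : ℕ → ℤ
  | 0 => 1
  | 1 => 1
  | m + 2 => (if m % 2 = 0 then b else a) * pseq a b (m + 1) - pseq a b m

def qseq (a b : ℤ) : ℕ → ℤ
  | 0 => 1
  | 1 => 1
  | m + 2 => (if m % 2 = 0 then a else b) * qseq a b (m + 1) - qseq a b m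

/-- Simple reflection r₁ on the weight lattice, in the basis (Λ₁, Λ₂). -/
def r1 (b : ℤ) (w : ℤ × ℤ) : ℤ × ℤ := (-w.1, b * w.1 + w.2)

/-- Simple reflection r₂ on the weight lattice, in the basis (Λ₁, Λ₂). -/
def r2 (a : ℤ) (w : ℤ × ℤ) : ℤ × ℤ := (w.1 + a * w.2, -w.2)

/-- `xl a b m = x_m · λ` where `x_{2k} = (r₂r₁)^k`, `x_{2k+1} = r₁(r₂r₁)^k`, `λ = Λ₁ - Λ₂`. -/
def xl (a b : ℤ) : ℕ → ℤ × ℤ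
  | 0 => (1, -1)
  | m + 1 => if m % 2 = 0 then r1 b (xl a b m) else r2 a (xl a b m)

/-- `yl a b m = y_m · λ` where `y_{2k} = (r₁r₂)^k`, `y_{2k+1} = r₂(r₁r₂)^k`, `λ = Λ₁ - Λ₂`. -/
def yl (a b : ℤ) : ℕ → ℤ × ℤ
  | 0 => (1, -1)
  | m + 1 => if m % 2 = 0 then r2 a (yl a b m) else r1 b (yl a b m)

/-- `xInv a b m` is the inverse `x_m⁻¹` as a map on the weight lattice. -/
def xInv (a b : ℤ) : ℕ → ℤ × ℤ → ℤ × ℤ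
  | 0 => id
  | m + 1 => (xInv a b m) ∘ (if m % 2 = 0 then r1 b else r2 a)

/-- `yInv a b m` is the inverse `y_m⁻¹` as a map on the weight lattice. -/
def yInv (a b : ℤ) : ℕ → ℤ × ℤ → ℤ × ℤ
  | 0 => id
  | m + 1 => (yInv a b m) ∘ (if m % 2 = 0 then r2 a else r1 b)

lemma pseq_step (a b : ℤ) (n : ℕ) :
    pseq a b (n + 2) = (if n % 2 = 0 then b else a) * pseq a b (n + 1) - pseq a b n := by
  rfl

lemma pseq_pos_mono (a b : ℤ) (ha : 2 ≤ a) (hb : 2 ≤ b) :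
    ∀ m : ℕ, 1 ≤ pseq a b m ∧ pseq a b m ≤ pseq a b (m + 1) := by
  intro m
  induction m with
  | zero => constructor <;> simp [pseq]
  | succ n ih =>
    obtain ⟨h1, h2⟩ := ih
    refine ⟨h1.trans h2, ?_⟩
    rw [pseq_step]
    split <;> nlinarith

lemma xl_formula (a b : ℤ) :
    ∀ m : ℕ, (m % 2 = 0 → xl a b m = (pseq a b (m + 1), -pseq a b m)) ∧
      (m % 2 = 1 → xl a b m = (-pseq a b m, pseq a b (m + 1))) := by
  intro m
  induction m with
  | zero => exact ⟨fun _ => rfl, fun h => by omega⟩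
  | succ n ih =>
    obtain ⟨h0, h1⟩ := ih
    rcases Nat.even_or_odd n with he | ho
    · have hn : n % 2 = 0 := Nat.even_iff.mp he
      have hx := h0 hn
      refine ⟨fun h => by omega, fun _ => ?_⟩
      show (if n % 2 = 0 then r1 b (xl a b n) else r2 a (xl a b n)) = _
      rw [if_pos hn, hx, pseq_step, if_pos hn]
      simp [r1]
      ring
    · have hn : n % 2 = 1 := Nat.odd_iff.mp ho
      have hx := h1 hn
      refine ⟨fun _ => ?_, fun h => by omega⟩
      show (if n % 2 = 0 then r1 b (xl a b n) else r2 a (xl a b n)) = _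
      rw [if_neg (by omega), hx, pseq_step, if_neg (by omega)]
      simp [r2]
      ring

lemma r1_invol (b : ℤ) (w : ℤ × ℤ) : r1 b (r1 b w) = w := by
  simp [r1]

lemma r2_invol (a : ℤ) (w : ℤ × ℤ) : r2 a (r2 a w) = w := by
  simp [r2]

theorem stmt9 (a b : ℤ) (ha : 2 ≤ a) (hb : 2 ≤ b) (hab : 4 < a * b) :
    ∀ m : ℕ,
      (Even m → (xl a b m).2 = -pseq a b m ∧ 0 < pseq a b m ∧
        (2 ≤ m → r2 a (xl a b m) = xl a b (m - 1))) ∧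
      (Odd m → (xl a b m).1 = -pseq a b m ∧ 0 < pseq a b m ∧
        r1 b (xl a b m) = xl a b (m - 1)) := by
  intro m
  have hpos := (pseq_pos_mono a b ha hb m).1
  constructor
  · intro hm
    have hn : m % 2 = 0 := Nat.even_iff.mp hm
    have hx := (xl_formula a b m).1 hn
    refine ⟨by rw [hx], by omega, fun h2 => ?_⟩
    obtain ⟨k, rfl⟩ : ∃ k, m = k + 1 := ⟨m - 1, by omega⟩
    have hk : k % 2 = 1 := by omega
    show r2 a (if k % 2 = 0 then r1 b (xl a b k) else r2 a (xl a b k)) = _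
    rw [if_neg (by omega), r2_invol]
    simp
  · intro hm
    have hn : m % 2 = 1 := Nat.odd_iff.mp hm
    have hx := (xl_formula a b m).2 hn
    refine ⟨by rw [hx], by omega, ?_⟩
    obtain ⟨k, rfl⟩ : ∃ k, m = k + 1 := ⟨m - 1, by omega⟩
    have hk : k % 2 = 0 := by omega
    show r1 b (if k % 2 = 0 then r1 b (xl a b k) else r2 a (xl a b k)) = _
    rw [if_pos hk, r1_invol]
    simp
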